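/- arXiv:nlin/0511007 — 6 statements merged into one kernel-verified Lean document; each statement's English description precedes it below -/
import Mathlib

section
/- The three functions J1 = H, J2 = p1 + p2 + p3, J3 = L1 + L2 + L3 are pairwise in involution: {Jr, Js} = 0 for all r, s ∈ {1,2,3}, where H is the coupled-oscillator Hamiltonian with magnetic terms. -/
/-!
The bracket is antisymmetric, so only `{H, J2}`, `{H, J3}` and `{J2, J3}` have to vanish.
Geometrically, `J2` generates the translations `q ↦ q + t (1,1,1)` and `J3` the simultaneous
rotations of `q` and `p` about the axis `(1,1,1)`; `H` and `J3` are invariant under both. The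
three brackets are then read off from the explicit, polynomial gradients.
-/

open scoped BigOperators

/-- Partial derivative of a function on phase space ℝ⁶ in the i-th coordinate. -/
noncomputable def pd (i : Fin 6) (f : (Fin 6 → ℝ) → ℝ) (x : Fin 6 → ℝ) : ℝ :=
  fderiv ℝ f x (Pi.single i 1)

/-- Canonical Poisson bracket on ℝ⁶ with coordinates (q1,q2,q3,p1,p2,p3). -/
noncomputable def pb (F G : (Fin 6 → ℝ) → ℝ) (x : Fin 6 → ℝ) : ℝ :=
  (pd 0 F x * pd 3 G x - pd 3 F x * pd 0 G x) +
  (pd 1 F x * pd 4 G x - pd 4 F x * pd 1 G x) +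
  (pd 2 F x * pd 5 G x - pd 5 F x * pd 2 G x)

/-- Angular momentum components: L1 = q2 p3 − q3 p2, etc. -/
def L1 (x : Fin 6 → ℝ) : ℝ := x 1 * x 5 - x 2 * x 4
def L2 (x : Fin 6 → ℝ) : ℝ := x 2 * x 3 - x 0 * x 5
def L3 (x : Fin 6 → ℝ) : ℝ := x 0 * x 4 - x 1 * x 3

/-- The Hamiltonian of the coupled oscillators with magnetic terms. -/
noncomputable def Ham (b k : ℝ) (x : Fin 6 → ℝ) : ℝ :=
  (1/2) * (x 3 ^ 2 + x 4 ^ 2 + x 5 ^ 2) + b * (L1 x + L2 x + L3 x) +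
  (1/2) * (b ^ 2 + k) * ((x 1 - x 0) ^ 2 + (x 2 - x 1) ^ 2 + (x 0 - x 2) ^ 2)

/-- J2 = p1 + p2 + p3. -/
def J2 (x : Fin 6 → ℝ) : ℝ := x 3 + x 4 + x 5

/-- J3 = L1 + L2 + L3. -/
def J3 (x : Fin 6 → ℝ) : ℝ := L1 x + L2 x + L3 x

section PartialDerivatives

variable {f g : (Fin 6 → ℝ) → ℝ} {x : Fin 6 → ℝ} {i : Fin 6}

lemma pd_coord (i j : Fin 6) (x : Fin 6 → ℝ) : pd i (fun y => y j) x = if j = i then 1 else 0 := by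
  simp [pd, (hasFDerivAt_apply j x).fderiv, Pi.single_apply]

lemma pd_const (i : Fin 6) (c : ℝ) (x : Fin 6 → ℝ) : pd i (fun _ => c) x = 0 := by
  simp [pd]

lemma pd_add (hf : DifferentiableAt ℝ f x) (hg : DifferentiableAt ℝ g x) :
    pd i (fun y => f y + g y) x = pd i f x + pd i g x := by
  simp [pd, fderiv_fun_add hf hg]

lemma pd_sub (hf : DifferentiableAt ℝ f x) (hg : DifferentiableAt ℝ g x) :
    pd i (fun y => f y - g y) x = pd i f x - pd i g x := by
  simp [pd, fderiv_fun_sub hf hg]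

lemma pd_mul (hf : DifferentiableAt ℝ f x) (hg : DifferentiableAt ℝ g x) :
    pd i (fun y => f y * g y) x = f x * pd i g x + g x * pd i f x := by
  simp [pd, fderiv_fun_mul hf hg]

lemma pd_pow (n : ℕ) (hf : DifferentiableAt ℝ f x) :
    pd i (fun y => f y ^ n) x = n * f x ^ (n - 1) * pd i f x := by
  simp [pd, fderiv_fun_pow n hf, mul_assoc]

end PartialDerivatives

section PoissonBracket

variable (F G : (Fin 6 → ℝ) → ℝ) (x : Fin 6 → ℝ)

lemma pb_self : pb F F x = 0 := by
  simp only [pb]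
  ring

lemma pb_antisymm : pb G F x = -pb F G x := by
  simp only [pb]
  ring

end PoissonBracket

lemma pd_Ham (b k : ℝ) (x : Fin 6 → ℝ) (i : Fin 6) :
    pd i (Ham b k) x =
      ![b * (x 4 - x 5) + (b ^ 2 + k) * (2 * x 0 - x 1 - x 2),
        b * (x 5 - x 3) + (b ^ 2 + k) * (2 * x 1 - x 2 - x 0),
        b * (x 3 - x 4) + (b ^ 2 + k) * (2 * x 2 - x 0 - x 1),
        x 3 + b * (x 2 - x 1), x 4 + b * (x 0 - x 2), x 5 + b * (x 1 - x 0)] i := by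
  unfold Ham L1 L2 L3
  fin_cases i <;>
  · simp (disch := fun_prop) only [pd_add, pd_sub, pd_mul, pd_pow, pd_coord, pd_const]
    simp only [Fin.zero_eta, Fin.mk_one, Fin.reduceFinMk, Fin.reduceEq, ↓reduceIte,
      Matrix.cons_val, Matrix.cons_val_zero, Matrix.cons_val_one]
    ring

lemma pd_J2 (x : Fin 6 → ℝ) (i : Fin 6) : pd i J2 x = ![0, 0, 0, 1, 1, 1] i := by
  unfold J2
  fin_cases i <;>
  · simp (disch := fun_prop) only [pd_add, pd_coord]
    simp only [Fin.zero_eta, Fin.mk_one, Fin.reduceFinMk, Fin.reduceEq, ↓reduceIte,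
      Matrix.cons_val, Matrix.cons_val_zero, Matrix.cons_val_one]
    ring

lemma pd_J3 (x : Fin 6 → ℝ) (i : Fin 6) :
    pd i J3 x = ![x 4 - x 5, x 5 - x 3, x 3 - x 4, x 2 - x 1, x 0 - x 2, x 1 - x 0] i := by
  unfold J3 L1 L2 L3
  fin_cases i <;>
  · simp (disch := fun_prop) only [pd_add, pd_sub, pd_mul, pd_coord]
    simp only [Fin.zero_eta, Fin.mk_one, Fin.reduceFinMk, Fin.reduceEq, ↓reduceIte,
      Matrix.cons_val, Matrix.cons_val_zero, Matrix.cons_val_one]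
    ring

lemma pb_Ham_J2 (b k : ℝ) (x : Fin 6 → ℝ) : pb (Ham b k) J2 x = 0 := by
  simp only [pb, pd_Ham, pd_J2, Matrix.cons_val]
  ring

lemma pb_Ham_J3 (b k : ℝ) (x : Fin 6 → ℝ) : pb (Ham b k) J3 x = 0 := by
  simp only [pb, pd_Ham, pd_J3, Matrix.cons_val]
  ring

lemma pb_J2_J3 (x : Fin 6 → ℝ) : pb J2 J3 x = 0 := by
  simp only [pb, pd_J2, pd_J3, Matrix.cons_val]
  ring

/-- J1 = H, J2, J3 are pairwise in involution. -/
theorem stmt2 (b k : ℝ) (x : Fin 6 → ℝ) :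
    pb (Ham b k) (Ham b k) x = 0 ∧ pb (Ham b k) J2 x = 0 ∧ pb (Ham b k) J3 x = 0 ∧
    pb J2 (Ham b k) x = 0 ∧ pb J2 J2 x = 0 ∧ pb J2 J3 x = 0 ∧
    pb J3 (Ham b k) x = 0 ∧ pb J3 J2 x = 0 ∧ pb J3 J3 x = 0 := by
  refine ⟨pb_self _ x, pb_Ham_J2 b k x, pb_Ham_J3 b k x, ?_, pb_self _ x, pb_J2_J3 x, ?_, ?_,
    pb_self _ x⟩
  · rw [pb_antisymm, pb_Ham_J2, neg_zero]
  · rw [pb_antisymm, pb_Ham_J3, neg_zero]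
  · rw [pb_antisymm, pb_J2_J3, neg_zero]
end

section
/- The vector field Y3ᵃ = q3 ∂/∂q1 + q1 ∂/∂q2 + q2 ∂/∂q3 + p3 ∂/∂p1 + p1 ∂/∂p2 + p2 ∂/∂p3 commutes with the Hamiltonian vector field Γ_H of H: the Lie bracket [Y3ᵃ, Γ_H] = 0, even though Y3ᵃ(H) ≠ 0 in general. -/
/-!
Since `H` is quadratic, `Γ_H` is linear, `Γ_H x = M x`, and `Y3ᵃ x = S x` for the permutation
matrix `S` that shifts `(q1,q2,q3)` and `(p1,p2,p3)` cyclically. The Lie bracket of two linear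
vector fields is a matrix commutator, `[Y3ᵃ, Γ_H] x = (M S - S M) x`. Every `3 × 3` block of `M` is
circulant, and circulant matrices commute with the cyclic shift, so the bracket vanishes.
That `Y3ᵃ(H) ≠ 0` is seen at the point with all coordinates `1`.
-/
open scoped BigOperators

/-- The Hamiltonian vector field of H, components (∂H/∂pᵢ, −∂H/∂qᵢ). -/
noncomputable def GammaH (b k : ℝ) (x : Fin 6 → ℝ) : Fin 6 → ℝ :=
  ![pd 3 (Ham b k) x, pd 4 (Ham b k) x, pd 5 (Ham b k) x,
    -pd 0 (Ham b k) x, -pd 1 (Ham b k) x, -pd 2 (Ham b k) x]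

/-- The vector field Y3ᵃ = q3 ∂q1 + q1 ∂q2 + q2 ∂q3 + p3 ∂p1 + p1 ∂p2 + p2 ∂p3. -/
def Y3a (x : Fin 6 → ℝ) : Fin 6 → ℝ := ![x 2, x 0, x 1, x 5, x 3, x 4]


open Matrix VectorField

theorem VectorField.lieBracket_mulVec {𝕜 n : Type*} [NontriviallyNormedField 𝕜] [CompleteSpace 𝕜]
    [Fintype n] [DecidableEq n] (A B : Matrix n n 𝕜) (x : n → 𝕜) :
    lieBracket 𝕜 (fun y => A *ᵥ y) (fun y => B *ᵥ y) x = (B * A - A * B) *ᵥ x := by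
  have hA : (fun y => A *ᵥ y) = ⇑(LinearMap.toContinuousLinearMap (toLin' A)) := rfl
  have hB : (fun y => B *ᵥ y) = ⇑(LinearMap.toContinuousLinearMap (toLin' B)) := rfl
  rw [hA, hB, lieBracket, ContinuousLinearMap.fderiv, ContinuousLinearMap.fderiv]
  simp only [LinearMap.coe_toContinuousLinearMap', toLin'_apply, mulVec_mulVec, sub_mulVec]

theorem fderiv_Ham_apply (b k : ℝ) (x v : Fin 6 → ℝ) :
    fderiv ℝ (Ham b k) x v =
      x 3 * v 3 + x 4 * v 4 + x 5 * v 5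
      + b * ((v 1 * x 5 + x 1 * v 5 - (v 2 * x 4 + x 2 * v 4))
           + (v 2 * x 3 + x 2 * v 3 - (v 0 * x 5 + x 0 * v 5))
           + (v 0 * x 4 + x 0 * v 4 - (v 1 * x 3 + x 1 * v 3)))
      + (b ^ 2 + k) * ((x 1 - x 0) * (v 1 - v 0) + (x 2 - x 1) * (v 2 - v 1)
           + (x 0 - x 2) * (v 0 - v 2)) := by
  have e (i : Fin 6) := hasFDerivAt_apply (𝕜 := ℝ) i x
  have hKin := (((e 3).pow 2).add ((e 4).pow 2)).add ((e 5).pow 2)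
  have hL := ((((e 1).mul (e 5)).sub ((e 2).mul (e 4))).add
      (((e 2).mul (e 3)).sub ((e 0).mul (e 5)))).add
      (((e 0).mul (e 4)).sub ((e 1).mul (e 3)))
  have hPot := ((((e 1).sub (e 0)).pow 2).add (((e 2).sub (e 1)).pow 2)).add
      (((e 0).sub (e 2)).pow 2)
  have h : HasFDerivAt (Ham b k) _ x :=
    ((hKin.const_mul (1 / 2)).add (hL.const_mul b)).add (hPot.const_mul (1 / 2 * (b ^ 2 + k)))
  rw [h.fderiv]
  simp only [Nat.add_one_sub_one, pow_one, nsmul_eq_mul, Nat.cast_ofNat, smul_add, Pi.sub_apply,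
    _root_.add_apply, _root_.smul_apply, ContinuousLinearMap.proj_apply, smul_eq_mul, _root_.sub_apply]
  ring

def hamiltonianMatrix (b k : ℝ) : Matrix (Fin 6) (Fin 6) ℝ :=
  let c := b ^ 2 + k
  !![0, -b, b, 1, 0, 0;
     b, 0, -b, 0, 1, 0;
     -b, b, 0, 0, 0, 1;
     -2 * c, c, c, 0, -b, b;
     c, -2 * c, c, b, 0, -b;
     c, c, -2 * c, -b, b, 0]

def cyclicShift : Matrix (Fin 6) (Fin 6) ℝ :=
  !![0, 0, 1, 0, 0, 0;
     1, 0, 0, 0, 0, 0;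
     0, 1, 0, 0, 0, 0;
     0, 0, 0, 0, 0, 1;
     0, 0, 0, 1, 0, 0;
     0, 0, 0, 0, 1, 0]

theorem GammaH_eq_mulVec (b k : ℝ) : GammaH b k = fun x => hamiltonianMatrix b k *ᵥ x := by
  ext x i
  fin_cases i <;>
    simp [GammaH, pd, fderiv_Ham_apply, hamiltonianMatrix, mulVec, dotProduct, Fin.sum_univ_succ,
      -mul_eq_mul_left_iff] <;>
    ring

theorem Y3a_eq_mulVec : Y3a = fun x => cyclicShift *ᵥ x := by
  ext x i
  fin_cases i <;> simp [Y3a, cyclicShift, mulVec, dotProduct, Fin.sum_univ_succ]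

theorem hamiltonianMatrix_commute_cyclicShift (b k : ℝ) :
    Commute (hamiltonianMatrix b k) cyclicShift := by
  ext i j
  fin_cases i <;> fin_cases j <;>
    simp [hamiltonianMatrix, cyclicShift, mul_apply, Fin.sum_univ_succ]

/-- Y3ᵃ commutes with Γ_H : [Y3ᵃ, Γ_H] = DΓ_H·Y3ᵃ − DY3ᵃ·Γ_H = 0,
even though Y3ᵃ(H) ≠ 0 in general. -/
theorem stmt6 :
    (∀ (b k : ℝ) (x : Fin 6 → ℝ),
      fderiv ℝ (GammaH b k) x (Y3a x) - fderiv ℝ Y3a x (GammaH b k x) = 0) ∧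
    (∃ (b k : ℝ) (x : Fin 6 → ℝ), fderiv ℝ (Ham b k) x (Y3a x) ≠ 0) := by
  refine ⟨fun b k x => ?_, 0, 0, fun _ => 1, ?_⟩
  · change lieBracket ℝ Y3a (GammaH b k) x = 0
    rw [Y3a_eq_mulVec, GammaH_eq_mulVec, lieBracket_mulVec,
      (hamiltonianMatrix_commute_cyclicShift b k).eq, sub_self, zero_mulVec]
  · simp [fderiv_Ham_apply, Y3a]
    norm_num
end

section
/- If a vector field Y on a symplectic manifold (M,ω0) satisfies [Y, Γ_H] = 0 where Γ_H is the Hamiltonian vector field of H (i(Γ_H)ω0 = dH), and ω_Y := L_Y ω0, then i(Γ_H)ω_Y = d(Y(H)); consequently Y(H) is a constant of motion: Γ_H(Y(H)) = 0. -/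
open scoped BigOperators

/-- Standard symplectic form on ℝ²ⁿ (coordinates split as n q's then n p's). -/
def omega0 (n : ℕ) (u v : Fin (n + n) → ℝ) : ℝ :=
  ∑ i : Fin n, (u (Fin.castAdd n i) * v (Fin.natAdd n i)
              - u (Fin.natAdd n i) * v (Fin.castAdd n i))

/-- ω₀ as a continuous bilinear map. -/
noncomputable def OmegaCLM (n : ℕ) :
    (Fin (n + n) → ℝ) →L[ℝ] (Fin (n + n) → ℝ) →L[ℝ] ℝ :=
  ∑ i : Fin n,
    ((ContinuousLinearMap.proj (Fin.castAdd n i)).smulRight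
      (ContinuousLinearMap.proj (Fin.natAdd n i) : (Fin (n + n) → ℝ) →L[ℝ] ℝ)
    - (ContinuousLinearMap.proj (Fin.natAdd n i)).smulRight
      (ContinuousLinearMap.proj (Fin.castAdd n i) : (Fin (n + n) → ℝ) →L[ℝ] ℝ))

lemma OmegaCLM_apply (n : ℕ) (u v : Fin (n + n) → ℝ) :
    OmegaCLM n u v = omega0 n u v := by
  simp [OmegaCLM, omega0, ContinuousLinearMap.sum_apply, smul_eq_mul, mul_comm]

lemma omega0_skew (n : ℕ) (u v : Fin (n + n) → ℝ) :
    omega0 n u v + omega0 n v u = 0 := by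
  unfold omega0
  rw [← Finset.sum_add_distrib]
  apply Finset.sum_eq_zero
  intro i _
  ring

/-- If Y commutes with the Hamiltonian vector field Γ_H (i(Γ_H)ω0 = dH), and
ω_Y = L_Y ω0 — which, ω0 having constant coefficients, is the 2-form
(u,v) ↦ ω0(DY·u, v) + ω0(u, DY·v) — then i(Γ_H)ω_Y = d(Y(H)); consequently
Y(H) is a constant of motion: Γ_H(Y(H)) = 0. -/
theorem stmt10 (n : ℕ) (H : (Fin (n + n) → ℝ) → ℝ)
    (Y ΓH : (Fin (n + n) → ℝ) → (Fin (n + n) → ℝ))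
    (hH : ContDiff ℝ (⊤ : ℕ∞) H) (hY : ContDiff ℝ (⊤ : ℕ∞) Y) (hΓ : ContDiff ℝ (⊤ : ℕ∞) ΓH)
    (hΓH : ∀ x v, omega0 n (ΓH x) v = fderiv ℝ H x v)
    (hcomm : ∀ x, fderiv ℝ ΓH x (Y x) = fderiv ℝ Y x (ΓH x)) :
    (∀ x v, omega0 n (fderiv ℝ Y x (ΓH x)) v + omega0 n (ΓH x) (fderiv ℝ Y x v)
        = fderiv ℝ (fun y => fderiv ℝ H y (Y y)) x v) ∧
    (∀ x, fderiv ℝ (fun y => fderiv ℝ H y (Y y)) x (ΓH x) = 0) := by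
  set Ω := OmegaCLM n with hΩ
  have hHd : Differentiable ℝ H := hH.differentiable (by simp)
  have hΓd : Differentiable ℝ ΓH := hΓ.differentiable (by simp)
  have hYd : Differentiable ℝ Y := hY.differentiable (by simp)
  have hfd : ∀ y, fderiv ℝ H y = Ω (ΓH y) := by
    intro y
    apply ContinuousLinearMap.ext
    intro v
    rw [OmegaCLM_apply]
    exact (hΓH y v).symm
  have hc : ∀ x, HasFDerivAt (fun y => fderiv ℝ H y)
      (Ω.comp (fderiv ℝ ΓH x)) x := by
    intro x
    have h1 : HasFDerivAt (fun y => Ω (ΓH y)) (Ω.comp (fderiv ℝ ΓH x)) x :=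
      Ω.hasFDerivAt.comp x (hΓd x).hasFDerivAt
    exact h1.congr_of_eventuallyEq (Filter.Eventually.of_forall fun y => hfd y)
  have key : ∀ x v, fderiv ℝ (fun y => fderiv ℝ H y (Y y)) x v
      = omega0 n (fderiv ℝ Y x (ΓH x)) v + omega0 n (ΓH x) (fderiv ℝ Y x v) := by
    intro x v
    have hcx : DifferentiableAt ℝ (fun y => fderiv ℝ H y) x := (hc x).differentiableAt
    rw [fderiv_clm_apply hcx (hYd x)]
    have hfc : fderiv ℝ (fun y => fderiv ℝ H y) x = Ω.comp (fderiv ℝ ΓH x) :=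
      (hc x).fderiv
    have hsymm : ∀ v w, (Ω.comp (fderiv ℝ ΓH x)) v w = (Ω.comp (fderiv ℝ ΓH x)) w v := by
      intro v w
      have := second_derivative_symmetric (f := H) (f' := fun y => fderiv ℝ H y)
        (f'' := Ω.comp (fderiv ℝ ΓH x)) (fun y => (hHd y).hasFDerivAt) (hc x) v w
      exact this
    simp only [ContinuousLinearMap.add_apply, ContinuousLinearMap.coe_comp',
      Function.comp_apply, ContinuousLinearMap.flip_apply, hfc]
    have h2 : Ω (fderiv ℝ ΓH x v) (Y x) = Ω (fderiv ℝ ΓH x (Y x)) v := by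
      have := hsymm v (Y x)
      simpa using this
    rw [h2, hcomm x, hfd x]
    rw [OmegaCLM_apply, OmegaCLM_apply]
    ring
  constructor
  · intro x v; exact (key x v).symm
  · intro x
    rw [key x (ΓH x)]
    have := omega0_skew n (fderiv ℝ Y x (ΓH x)) (ΓH x)
    linarith
end

section
/- If k + b² = 0, then the function T2 = q1 p1 + q2 p2 + q3 p3 satisfies Γ_H(Γ_H(T2)) = 0, i.e., the second derivative of T2 along the Hamiltonian flow vanishes, making T2 a master integral of degree 1. -/
open scoped BigOperators

/-- T2 = q1 p1 + q2 p2 + q3 p3. -/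
def T2 (x : Fin 6 → ℝ) : ℝ := x 0 * x 3 + x 1 * x 4 + x 2 * x 5

/-!
`T2` generates the scaling `q ↦ λ q`, `p ↦ p / λ`, under which the kinetic energy has weight 2,
the angular momentum `J3` weight 0 and the potential weight `-2`. When `k = -b²` the potential
vanishes, so `{T2, H} = p1² + p2² + p3²`; this is invariant under the rotations generated by `J3`
and hence Poisson-commutes with `H`.
-/

open ContinuousLinearMap

local notation "e" i => (Pi.single i 1 : Fin 6 → ℝ)

local notation "π" i => (proj (R := ℝ) (φ := fun _ : Fin 6 => ℝ) i)

lemma pb_eq_of_hasFDerivAt {F G : (Fin 6 → ℝ) → ℝ} {F' G' : (Fin 6 → ℝ) →L[ℝ] ℝ}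
    {x : Fin 6 → ℝ} (hF : HasFDerivAt F F' x) (hG : HasFDerivAt G G' x) :
    pb F G x =
      (F' (e 0) * G' (e 3) - F' (e 3) * G' (e 0)) +
      (F' (e 1) * G' (e 4) - F' (e 4) * G' (e 1)) +
      (F' (e 2) * G' (e 5) - F' (e 5) * G' (e 2)) := by
  simp only [pb, pd, hF.fderiv, hG.fderiv]

def pSq (x : Fin 6 → ℝ) : ℝ := x 3 ^ 2 + x 4 ^ 2 + x 5 ^ 2

lemma Ham_neg_sq (b : ℝ) : Ham b (-b ^ 2) = fun x => (1 / 2) * pSq x + b * J3 x := by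
  ext x
  simp only [Ham, pSq, J3]
  ring

section Derivatives

variable (x : Fin 6 → ℝ)

lemma hasFDerivAt_coord_mul (i j : Fin 6) :
    HasFDerivAt (fun y : Fin 6 → ℝ => y i * y j) (x i • (π j) + x j • (π i)) x :=
  (hasFDerivAt_apply i x).mul (hasFDerivAt_apply j x)

lemma hasFDerivAt_T2 :
    HasFDerivAt T2 ((x 0 • (π 3) + x 3 • (π 0)) + (x 1 • (π 4) + x 4 • (π 1)) +
      (x 2 • (π 5) + x 5 • (π 2))) x :=
  ((hasFDerivAt_coord_mul x 0 3).add (hasFDerivAt_coord_mul x 1 4)).add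
    (hasFDerivAt_coord_mul x 2 5)

lemma hasFDerivAt_pSq :
    HasFDerivAt pSq ((x 3 • (π 3) + x 3 • (π 3)) + (x 4 • (π 4) + x 4 • (π 4)) +
      (x 5 • (π 5) + x 5 • (π 5))) x := by
  unfold pSq
  simp only [sq]
  exact ((hasFDerivAt_coord_mul x 3 3).add (hasFDerivAt_coord_mul x 4 4)).add
    (hasFDerivAt_coord_mul x 5 5)

lemma hasFDerivAt_J3 :
    HasFDerivAt J3
      (((x 1 • (π 5) + x 5 • (π 1)) - (x 2 • (π 4) + x 4 • (π 2))) +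
        ((x 2 • (π 3) + x 3 • (π 2)) - (x 0 • (π 5) + x 5 • (π 0))) +
        ((x 0 • (π 4) + x 4 • (π 0)) - (x 1 • (π 3) + x 3 • (π 1)))) x :=
  ((((hasFDerivAt_coord_mul x 1 5).sub (hasFDerivAt_coord_mul x 2 4)).add
    ((hasFDerivAt_coord_mul x 2 3).sub (hasFDerivAt_coord_mul x 0 5))).add
    ((hasFDerivAt_coord_mul x 0 4).sub (hasFDerivAt_coord_mul x 1 3)))

end Derivatives

/-- The coefficients are the components of the Hamiltonian vector field of `pSq / 2 + b * J3`. -/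
lemma pb_Ham_neg_sq {F : (Fin 6 → ℝ) → ℝ} {F' : (Fin 6 → ℝ) →L[ℝ] ℝ} {x : Fin 6 → ℝ}
    (hF : HasFDerivAt F F' x) (b : ℝ) :
    pb F (Ham b (-b ^ 2)) x =
      (F' (e 0) * (x 3 + b * (x 2 - x 1)) - F' (e 3) * (b * (x 4 - x 5))) +
      (F' (e 1) * (x 4 + b * (x 0 - x 2)) - F' (e 4) * (b * (x 5 - x 3))) +
      (F' (e 2) * (x 5 + b * (x 1 - x 0)) - F' (e 5) * (b * (x 3 - x 4))) := by
  have hH := ((hasFDerivAt_pSq x).const_mul (1 / 2)).fun_add ((hasFDerivAt_J3 x).const_mul b)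
  rw [Ham_neg_sq, pb_eq_of_hasFDerivAt hF hH]
  simp only [add_apply, sub_apply, smul_apply, smul_eq_mul, proj_apply, Pi.single_eq_same,
    Pi.single_eq_of_ne, ne_eq, Fin.reduceEq, not_false_eq_true]
  ring

lemma pb_T2_Ham_neg_sq (b : ℝ) (x : Fin 6 → ℝ) : pb T2 (Ham b (-b ^ 2)) x = pSq x := by
  rw [pb_Ham_neg_sq (hasFDerivAt_T2 x), pSq]
  simp only [add_apply, smul_apply, smul_eq_mul, proj_apply, Pi.single_eq_same,
    Pi.single_eq_of_ne, ne_eq, Fin.reduceEq, not_false_eq_true]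
  ring

lemma pb_pSq_Ham_neg_sq (b : ℝ) (x : Fin 6 → ℝ) : pb pSq (Ham b (-b ^ 2)) x = 0 := by
  rw [pb_Ham_neg_sq (hasFDerivAt_pSq x)]
  simp only [add_apply, smul_apply, smul_eq_mul, proj_apply, Pi.single_eq_same,
    Pi.single_eq_of_ne, ne_eq, Fin.reduceEq, not_false_eq_true]
  ring

/-- If k + b² = 0, then Γ_H(Γ_H(T2)) = 0: T2 is a master integral of degree 1. -/
theorem stmt13 (b k : ℝ) (hk : k = -b^2) (x : Fin 6 → ℝ) :
    pb (fun y => pb T2 (Ham b k) y) (Ham b k) x = 0 := by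
  subst hk
  simp only [pb_T2_Ham_neg_sq]
  exact pb_pSq_Ham_neg_sq b x
end

section
/- The Poisson bracket of J3 = L1 + L2 + L3 with the cubic function J4 (defined with parameter b ≠ 0) does not vanish identically: there exists a point of ℝ⁶ at which {J3, J4} ≠ 0. -/
open scoped BigOperators

/-- z1 = 4(q21² + q13²) + q32², and cyclic. -/
def z1 (x : Fin 6 → ℝ) : ℝ := 4 * ((x 1 - x 0)^2 + (x 0 - x 2)^2) + (x 2 - x 1)^2
def z2 (x : Fin 6 → ℝ) : ℝ := 4 * ((x 2 - x 1)^2 + (x 1 - x 0)^2) + (x 0 - x 2)^2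
def z3 (x : Fin 6 → ℝ) : ℝ := 4 * ((x 0 - x 2)^2 + (x 2 - x 1)^2) + (x 1 - x 0)^2

/-- The cubic function J4. -/
noncomputable def J4c (b : ℝ) (x : Fin 6 → ℝ) : ℝ :=
  (1/3) * (x 3 ^ 3 + x 4 ^ 3 + x 5 ^ 3)
  - b * ((x 2 - x 1) * x 3 ^ 2 + (x 0 - x 2) * x 4 ^ 2 + (x 1 - x 0) * x 5 ^ 2)
  + b^2 * (z1 x * x 3 + z2 x * x 4 + z3 x * x 5)
  + 9 * b^3 * ((x 1 - x 0)^3 + (x 0 - x 2)^3 + (x 2 - x 1)^3)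

/-! On the momentum space `q = 0` every `b`-dependent term of `∂J4/∂pᵢ` vanishes, being a multiple
of a difference `qⱼ - qₖ`, and so do all `∂J3/∂pᵢ`. Hence there
`{J3, J4} = Σᵢ ∂J3/∂qᵢ · pᵢ² = (p₂ - p₃) p₁² + (p₃ - p₁) p₂² + (p₁ - p₂) p₃²`,
a Vandermonde determinant, which is nonzero for distinct momenta. -/

theorem pd_eq_lineDeriv {f : (Fin 6 → ℝ) → ℝ} {x : Fin 6 → ℝ} (hf : DifferentiableAt ℝ f x)
    (i : Fin 6) : pd i f x = lineDeriv ℝ f x (Pi.single i 1) :=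
  hf.lineDeriv_eq_fderiv.symm

theorem differentiable_J3 : Differentiable ℝ J3 := by
  unfold J3 L1 L2 L3
  fun_prop

theorem differentiable_J4c (b : ℝ) : Differentiable ℝ (J4c b) := by
  unfold J4c z1 z2 z3
  fun_prop

def momentumPoint (p₁ p₂ p₃ : ℝ) : Fin 6 → ℝ := ![0, 0, 0, p₁, p₂, p₃]

section momentumPoint

variable (p₁ p₂ p₃ : ℝ)

theorem pd_J3_momentumPoint :
    pd 0 J3 (momentumPoint p₁ p₂ p₃) = p₂ - p₃ ∧ pd 1 J3 (momentumPoint p₁ p₂ p₃) = p₃ - p₁ ∧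
    pd 2 J3 (momentumPoint p₁ p₂ p₃) = p₁ - p₂ ∧ pd 3 J3 (momentumPoint p₁ p₂ p₃) = 0 ∧
    pd 4 J3 (momentumPoint p₁ p₂ p₃) = 0 ∧ pd 5 J3 (momentumPoint p₁ p₂ p₃) = 0 := by
  simp only [pd_eq_lineDeriv (differentiable_J3 _), lineDeriv]
  refine ⟨?_, ?_, ?_, ?_, ?_, ?_⟩ <;> simp [J3, L1, L2, L3, momentumPoint] <;> ring

theorem pd_momentum_J4c_momentumPoint (b : ℝ) :
    pd 3 (J4c b) (momentumPoint p₁ p₂ p₃) = p₁ ^ 2 ∧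
    pd 4 (J4c b) (momentumPoint p₁ p₂ p₃) = p₂ ^ 2 ∧
    pd 5 (J4c b) (momentumPoint p₁ p₂ p₃) = p₃ ^ 2 := by
  simp only [pd_eq_lineDeriv (differentiable_J4c b _), lineDeriv]
  refine ⟨?_, ?_, ?_⟩ <;>
    simp [J4c, z1, z2, z3, momentumPoint, deriv_comp_const_add (fun t : ℝ => t ^ 3)]

theorem pb_J3_J4c_momentumPoint (b : ℝ) :
    pb J3 (J4c b) (momentumPoint p₁ p₂ p₃) = (p₁ - p₂) * (p₂ - p₃) * (p₁ - p₃) := by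
  obtain ⟨hq₁, hq₂, hq₃, hp₁, hp₂, hp₃⟩ := pd_J3_momentumPoint p₁ p₂ p₃
  obtain ⟨kp₁, kp₂, kp₃⟩ := pd_momentum_J4c_momentumPoint p₁ p₂ p₃ b
  rw [pb, hq₁, hq₂, hq₃, hp₁, hp₂, hp₃, kp₁, kp₂, kp₃]
  ring

end momentumPoint

theorem stmt18_general (b : ℝ) :
    ∃ x : Fin 6 → ℝ, pb J3 (J4c b) x ≠ 0 :=
  ⟨momentumPoint 0 1 2, by rw [pb_J3_J4c_momentumPoint]; norm_num⟩

/-- For b ≠ 0, {J3, J4} does not vanish identically. -/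
theorem stmt18 (b : ℝ) (hb : b ≠ 0) :
    ∃ x : Fin 6 → ℝ, pb J3 (J4c b) x ≠ 0 :=
  stmt18_general b
end

section
/- The differentials of the four functions H, J2 = p1+p2+p3, J3 = L1+L2+L3, and the cubic J4 (with k = 8b², b ≠ 0) are linearly independent at some point of ℝ⁶; i.e., the four constants of motion are functionally independent. -/
open scoped BigOperators
set_option maxHeartbeats 2000000

/-- The gradient (differential) of F at x. -/
noncomputable def grad (F : (Fin 6 → ℝ) → ℝ) (x : Fin 6 → ℝ) : Fin 6 → ℝ :=
  fun i => pd i F x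

/-- The chosen base point: q = (1,0,0), p = (0,0,0). -/
noncomputable def pt : Fin 6 → ℝ := fun j => if j = 0 then 1 else 0

private lemma hfd_sq {f : (Fin 6 → ℝ) → ℝ} {f' : (Fin 6 → ℝ) →L[ℝ] ℝ} {x : Fin 6 → ℝ}
    (hf : HasFDerivAt f f' x) :
    HasFDerivAt (fun y => f y ^ 2) (f x • f' + f x • f') x := by
  have h : (fun y => f y ^ 2) = fun y => f y * f y := by funext y; ring
  rw [h]; exact hf.mul hf

private lemma vec6_five {α : Type*} (a b c d e f : α) : ![a, b, c, d, e, f] 5 = f := rfl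

private lemma hfd_cube {f : (Fin 6 → ℝ) → ℝ} {f' : (Fin 6 → ℝ) →L[ℝ] ℝ} {x : Fin 6 → ℝ}
    (hf : HasFDerivAt f f' x) :
    HasFDerivAt (fun y => f y ^ 3)
      ((f x * f x) • f' + f x • (f x • f' + f x • f')) x := by
  have h : (fun y => f y ^ 3) = fun y => f y * f y * f y := by funext y; ring
  rw [h]; exact (hf.mul hf).mul hf


/-- For b ≠ 0 and k = 8b², the differentials of H, J2, J3, J4 are linearly
independent at some point: the four constants of motion are functionally
independent. -/

theorem stmt19 (b : ℝ) (hb : b ≠ 0) :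
    ∃ x : Fin 6 → ℝ, LinearIndependent ℝ
      ![grad (Ham b (8 * b^2)) x, grad J2 x, grad J3 x, grad (J4c b) x] := by
  classical
  refine ⟨pt, ?_⟩
  have hp : ∀ i : Fin 6, HasFDerivAt (fun y : Fin 6 → ℝ => y i)
      (ContinuousLinearMap.proj (R := ℝ) (φ := fun _ : Fin 6 => ℝ) i) pt := fun i =>
    (ContinuousLinearMap.proj i : (Fin 6 → ℝ) →L[ℝ] ℝ).hasFDerivAt
  -- basic difference derivatives
  have h10 := (hp 1).sub (hp 0)
  have h21 := (hp 2).sub (hp 1)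
  have h02 := (hp 0).sub (hp 2)
  -- angular momenta
  have hL1 := ((hp 1).mul (hp 5)).sub ((hp 2).mul (hp 4))
  have hL2 := ((hp 2).mul (hp 3)).sub ((hp 0).mul (hp 5))
  have hL3 := ((hp 0).mul (hp 4)).sub ((hp 1).mul (hp 3))
  -- the Hamiltonian
  have hH : HasFDerivAt (Ham b (8 * b^2)) _ pt :=
    (((((hfd_sq (hp 3)).add (hfd_sq (hp 4))).add (hfd_sq (hp 5))).const_mul
        (1/2 : ℝ)).add
      (((hL1.add hL2).add hL3).const_mul b)).add
      ((((hfd_sq h10).add (hfd_sq h21)).add (hfd_sq h02)).const_mul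
        (1/2 * (b ^ 2 + 8 * b ^ 2)))
  have hJ2 : HasFDerivAt J2 _ pt := ((hp 3).add (hp 4)).add (hp 5)
  have hJ3 : HasFDerivAt J3 _ pt := (hL1.add hL2).add hL3
  -- z functions
  have hz1 := (((hfd_sq h10).add (hfd_sq h02)).const_mul (4:ℝ)).add (hfd_sq h21)
  have hz2 := (((hfd_sq h21).add (hfd_sq h10)).const_mul (4:ℝ)).add (hfd_sq h02)
  have hz3 := (((hfd_sq h02).add (hfd_sq h21)).const_mul (4:ℝ)).add (hfd_sq h10)
  have hT1 := (((hfd_cube (hp 3)).add (hfd_cube (hp 4))).add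
      (hfd_cube (hp 5))).const_mul (1/3 : ℝ)
  have hT2 := (((h21.mul (hfd_sq (hp 3))).add (h02.mul (hfd_sq (hp 4)))).add
      (h10.mul (hfd_sq (hp 5)))).const_mul b
  have hT3 := (((hz1.mul (hp 3)).add (hz2.mul (hp 4))).add
      (hz3.mul (hp 5))).const_mul (b ^ 2)
  have hT4 := (((hfd_cube h10).add (hfd_cube h02)).add
      (hfd_cube h21)).const_mul (9 * b ^ 3)
  have hJ4 : HasFDerivAt (J4c b) _ pt := ((hT1.sub hT2).add hT3).add hT4
  have e1 : grad (Ham b (8 * b^2)) pt = ![18*b^2, -9*b^2, -9*b^2, 0, b, -b] := by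
    funext i
    have hd := hH.fderiv
    fin_cases i <;>
      simp [grad, pd, hd, pt, Pi.single_apply, vec6_five] <;> try ring
  have e2 : grad J2 pt = ![0, 0, 0, 1, 1, 1] := by
    funext i
    have hd := hJ2.fderiv
    fin_cases i <;>
      simp [grad, pd, hd, pt, Pi.single_apply, vec6_five]
  have e3 : grad J3 pt = ![0, 0, 0, 0, 1, -1] := by
    funext i
    have hd := hJ3.fderiv
    fin_cases i <;>
      simp [grad, pd, hd, pt, Pi.single_apply, vec6_five]
  have e4 : grad (J4c b) pt = ![0, 27*b^3, -27*b^3, 8*b^2, 5*b^2, 5*b^2] := by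
    funext i
    have hd := hJ4.fderiv
    fin_cases i <;>
      simp [grad, pd, hd, pt, Pi.single_apply, vec6_five] <;> try ring
  rw [e1, e2, e3, e4]
  rw [Fintype.linearIndependent_iff]
  intro g hg
  have hb2 : b ^ 2 ≠ 0 := pow_ne_zero _ hb
  have hb3 : b ^ 3 ≠ 0 := pow_ne_zero _ hb
  have h0 := congrFun hg 0
  have h1 := congrFun hg 1
  have h3 := congrFun hg 3
  have h4 := congrFun hg 4
  simp [Fin.sum_univ_four, Matrix.cons_val_zero, Matrix.cons_val_one, Matrix.head_cons,
    Matrix.cons_val_two, Matrix.tail_cons, Matrix.cons_val_three, Matrix.cons_val_four,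
    vec6_five, Matrix.vecHead, Matrix.vecTail, Function.comp, hb] at h0 h1 h3 h4
  have hg0 : g 0 = 0 := h0
  have hg3 : g 3 = 0 := by
    rw [hg0] at h1; simpa [hb] using h1
  have hg1 : g 1 = 0 := by
    rw [hg3] at h3; simpa using h3
  have hg2 : g 2 = 0 := by
    rw [hg0, hg1, hg3] at h4; simpa using h4
  intro i
  fin_cases i <;> assumption
end
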